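/- In the symmetric density decomposition setting, fix ι ∈ {0,1} and t > 0, and define A_t := {x ∈ Ω_ι : ρ_ι^ac(x) ≤ t} and B_t := {y ∈ Ω_ῑ : ρ_ῑ^ac(y) ≥ 1/t}. If σ is a finite measure on Ω_ι × Ω_ῑ that vanishes outside the edge relation (i.e. σ gives zero mass to the set of pairs (x_ι, x_ῑ) whose corresponding ordered pair in Ω0 × Ω1 lies outside E), whose Ω_ι-marginal is at most the restriction of ν_ι to A_t, and whose Ω_ῑ-marginal is at most the restriction of ν_ῑ^ac to the complement of B_t, then σ = 0. -/

import Mathlib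

/-!
Fix levels `s < 1/t` and `b > t` with `s * b < 1` at which the level sets `{ρ1 = s}` and
`{ρ0 = b}` are null (all but countably many levels qualify). Thinning `π0` to capacity `s` on
side 1 gives a plan that is optimal by level optimality; by an augmentation argument, the set
`G ⊆ Ω0` on which it still saturates `ν0` is where every bounded subflow into `{ρ1 < s}` must
start, and `π0` carries `G` into `{ρ1 < s}` with density at most `s`. Symmetrically `π1` at
level `b` gives `H ⊆ Ω1`. Following `π0` from `G ∩ {ρ0 < b}` into `H ∩ {ρ1 < s}` and `π1` back
shows that `ν0 (G ∩ {ρ0 < b})` is at most `s * b` times itself, hence zero. The part of `σ`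
ending in `{ρ1 < s}` starts in this null set, and `s ↑ 1/t`. The case `ι = 1` is the case
`ι = 0` for the transposed relation.
-/

/- "Fix ι ∈ {0,1}" is rendered as the conjunction of the two cases; for `ι = 1` the subflow
lives on `Ω1 × Ω0` and the edge constraint refers to the transposed pairs. -/

open MeasureTheory ProbabilityTheory Filter
open scoped ENNReal NNReal

noncomputable section

variable {Ω0 Ω1 : Type} [MeasurableSpace Ω0] [MeasurableSpace Ω1]

/-- Side-0 refinements: finite plans concentrated on `E` with first marginal `ν0`. -/
def Plans0 (E : Set (Ω0 × Ω1)) (ν0 : Measure Ω0) : Set (Measure (Ω0 × Ω1)) :=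
  {π | IsFiniteMeasure π ∧ π Eᶜ = 0 ∧ π.map Prod.fst = ν0}

/-- Side-1 refinements: finite plans concentrated on `E` with second marginal `ν1`. -/
def Plans1 (E : Set (Ω0 × Ω1)) (ν1 : Measure Ω1) : Set (Measure (Ω0 × Ω1)) :=
  {π | IsFiniteMeasure π ∧ π Eᶜ = 0 ∧ π.map Prod.snd = ν1}

/-- Capped feasible subplans for side-0 refinements (cap on side 1). -/
def Feas0 (E : Set (Ω0 × Ω1)) (ν0 : Measure Ω0) (ν1 : Measure Ω1) (t : ℝ) :
    Set (Measure (Ω0 × Ω1)) :=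
  {σ | IsFiniteMeasure σ ∧ σ Eᶜ = 0 ∧ σ.map Prod.fst ≤ ν0 ∧
    σ.map Prod.snd ≤ (ENNReal.ofReal t) • ν1}

def Fit0 (E : Set (Ω0 × Ω1)) (ν0 : Measure Ω0) (ν1 : Measure Ω1) (t : ℝ) : ℝ≥0∞ :=
  ⨆ σ ∈ Feas0 E ν0 ν1 t, σ Set.univ

/-- Level-optimal maximin from side 0 to side 1. -/
def LevelOpt0 (E : Set (Ω0 × Ω1)) (ν0 : Measure Ω0) (ν1 : Measure Ω1)
    (π : Measure (Ω0 × Ω1)) : Prop :=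
  ∀ t : ℝ, 0 < t →
    ∫⁻ y, min ((π.map Prod.snd).rnDeriv ν1 y) (ENNReal.ofReal t) ∂ν1 = Fit0 E ν0 ν1 t

/-- Capped feasible subplans for side-1 refinements (cap on side 0). -/
def Feas1 (E : Set (Ω0 × Ω1)) (ν0 : Measure Ω0) (ν1 : Measure Ω1) (t : ℝ) :
    Set (Measure (Ω0 × Ω1)) :=
  {σ | IsFiniteMeasure σ ∧ σ Eᶜ = 0 ∧ σ.map Prod.snd ≤ ν1 ∧
    σ.map Prod.fst ≤ (ENNReal.ofReal t) • ν0}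

def Fit1 (E : Set (Ω0 × Ω1)) (ν0 : Measure Ω0) (ν1 : Measure Ω1) (t : ℝ) : ℝ≥0∞ :=
  ⨆ σ ∈ Feas1 E ν0 ν1 t, σ Set.univ

/-- Level-optimal maximin from side 1 to side 0. -/
def LevelOpt1 (E : Set (Ω0 × Ω1)) (ν0 : Measure Ω0) (ν1 : Measure Ω1)
    (π : Measure (Ω0 × Ω1)) : Prop :=
  ∀ t : ℝ, 0 < t →
    ∫⁻ x, min ((π.map Prod.fst).rnDeriv ν0 x) (ENNReal.ofReal t) ∂ν0 = Fit1 E ν0 ν1 t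

open Set

section Generic

variable {α β : Type*} [MeasurableSpace α] [MeasurableSpace β]

lemma map_withDensity_comp (μ : Measure α) {T : α → β} (hT : Measurable T)
    {f : β → ℝ≥0∞} (hf : Measurable f) :
    (μ.withDensity (f ∘ T)).map T = (μ.map T).withDensity f := by
  ext B hB
  rw [Measure.map_apply hT hB, withDensity_apply _ hB, withDensity_apply _ (hT hB),
    setLIntegral_map hB hf hT]
  rfl

lemma withDensity_le_self {μ : Measure α} {f : α → ℝ≥0∞} (hf : ∀ x, f x ≤ 1) :
    μ.withDensity f ≤ μ :=
  (withDensity_mono (Eventually.of_forall hf)).trans withDensity_one.le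

lemma withDensity_add_smul_restrict_le {μ : Measure α} {f g : α → ℝ≥0∞} (hf : Measurable f)
    {W : Set α} (hW : MeasurableSet W) {k : ℝ≥0∞}
    (h : ∀ᵐ x ∂μ, f x + W.indicator (fun _ ↦ k) x ≤ g x) :
    μ.withDensity f + k • μ.restrict W ≤ μ.withDensity g := by
  rw [← withDensity_const, ← withDensity_indicator hW, ← withDensity_add_left hf]
  exact withDensity_mono h

lemma map_restrict_le_smul_restrict {ξ : Measure α} {f : α → β} (hf : Measurable f)
    {μ : Measure β} {c : ℝ≥0∞} (h : ξ.map f ≤ c • μ) {W : Set β} (hW : MeasurableSet W)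
    {S : Set α} (hS : S ⊆ f ⁻¹' W) :
    (ξ.restrict S).map f ≤ c • μ.restrict W :=
  calc (ξ.restrict S).map f ≤ (ξ.restrict (f ⁻¹' W)).map f :=
        Measure.map_mono (Measure.restrict_mono hS le_rfl) hf
    _ = (ξ.map f).restrict W := (Measure.restrict_map hf hW).symm
    _ ≤ (c • μ).restrict W := Measure.restrict_mono subset_rfl h
    _ = c • μ.restrict W := Measure.restrict_smul c μ W

lemma measure_compl_eq_zero_of_le_smul_restrict {μ ν : Measure α} {c : ℝ≥0∞} {L : Set α}
    (hL : MeasurableSet L) (h : μ ≤ c • ν.restrict L) : μ Lᶜ = 0 := by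
  refine le_antisymm ((h Lᶜ).trans_eq ?_) bot_le
  rw [Measure.smul_apply, Measure.restrict_apply hL.compl, compl_inter_self, measure_empty,
    smul_zero]

lemma restrict_setOf_le_eq_restrict_setOf_lt {μ : Measure α} {f : α → ℝ≥0∞} {c : ℝ≥0∞}
    (h : μ {x | f x = c} = 0) : μ.restrict {x | f x ≤ c} = μ.restrict {x | f x < c} := by
  refine Measure.restrict_congr_set (ae_eq_set.2 ⟨measure_mono_null ?_ h, ?_⟩)
  · exact fun x hx ↦ le_antisymm hx.1 (not_lt.1 hx.2)
  · exact measure_mono_null (fun x (hx : f x < c ∧ ¬f x ≤ c) ↦ (hx.2 hx.1.le).elim) measure_empty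

lemma eventually_add_inv_nat_lt {a b : ℝ≥0∞} (h : a < b) :
    ∀ᶠ n : ℕ in atTop, a + (n : ℝ≥0∞)⁻¹ < b := by
  have := (tendsto_const_nhds (x := a)).add ENNReal.tendsto_inv_nat_nhds_zero
  rw [add_zero] at this
  exact this.eventually_lt_const h

lemma exists_mem_Ioo_measure_setOf_eq_ofReal_eq_zero {μ : Measure α} [SFinite μ]
    {f : α → ℝ≥0∞} (hf : Measurable f) {a b : ℝ} (ha : 0 ≤ a) (hab : a < b) :
    ∃ r ∈ Ioo a b, μ {x | f x = ENNReal.ofReal r} = 0 := by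
  have hcount : {r : ℝ | 0 ≤ r ∧ 0 < μ {x | f x = ENNReal.ofReal r}}.Countable := by
    refine ((Measure.countable_meas_level_set_pos (μ := μ) hf).image ENNReal.toReal).mono ?_
    rintro r ⟨hr, hpos⟩
    exact ⟨ENNReal.ofReal r, hpos, ENNReal.toReal_ofReal hr⟩
  obtain ⟨r, hr, hrab⟩ := (hcount.dense_compl ℝ).exists_between hab
  refine ⟨r, hrab, ?_⟩
  simpa [ha.trans hrab.1.le] using hr

lemma map_snd_restrict_le_of_le_withDensity {π : Measure (α × β)} [IsFiniteMeasure π]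
    {g : β → ℝ≥0∞} (hg : Measurable g) (hg1 : ∀ y, g y ≤ 1) {A : Set (α × β)}
    (hA : MeasurableSet A) (hπA : π A ≤ π.withDensity (g ∘ Prod.snd) A) :
    (π.restrict A).map Prod.snd ≤ (π.map Prod.snd).restrict {y | g y = 1} := by
  set T := {y | g y = 1}
  have hT : MeasurableSet T := measurableSet_eq_fun hg measurable_const
  have hle : π.withDensity (g ∘ Prod.snd) ≤ π := withDensity_le_self fun p ↦ hg1 p.2
  have hfin : ∫⁻ p in A, (g ∘ Prod.snd) p ∂π ≠ ∞ := by
    rw [← withDensity_apply _ hA]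
    exact ((hle A).trans_lt (measure_lt_top π A)).ne
  have hae : ∀ᵐ p ∂π.restrict A, p ∈ Prod.snd ⁻¹' T :=
    ae_eq_of_ae_le_of_lintegral_le (ae_of_all _ fun p ↦ hg1 p.2) hfin aemeasurable_const
      (by simpa [withDensity_apply _ hA] using hπA)
  calc (π.restrict A).map Prod.snd
      = ((π.restrict A).restrict (Prod.snd ⁻¹' T)).map Prod.snd := by
        rw [Measure.restrict_eq_self_of_ae_mem hae]
    _ ≤ (π.restrict (Prod.snd ⁻¹' T)).map Prod.snd :=
        Measure.map_mono (Measure.restrict_mono subset_rfl Measure.restrict_le_self)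
          measurable_snd
    _ = (π.map Prod.snd).restrict T := (Measure.restrict_map measurable_snd hT).symm

end Generic

section Swap

variable {α β : Type} [MeasurableSpace α] [MeasurableSpace β]

lemma map_swap_apply (σ : Measure (α × β)) (s : Set (β × α)) :
    σ.map Prod.swap s = σ (Prod.swap ⁻¹' s) :=
  MeasurableEquiv.prodComm.map_apply s

lemma le_fit0 {E : Set (α × β)} {μ : Measure α} {ν : Measure β} {t : ℝ}
    {σ : Measure (α × β)} (h : σ ∈ Feas0 E μ ν t) : σ univ ≤ Fit0 E μ ν t :=
  le_iSup₂ (f := fun σ (_ : σ ∈ Feas0 E μ ν t) ↦ σ univ) σ h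

lemma le_fit1 {E : Set (α × β)} {μ : Measure α} {ν : Measure β} {t : ℝ}
    {σ : Measure (α × β)} (h : σ ∈ Feas1 E μ ν t) : σ univ ≤ Fit1 E μ ν t :=
  le_iSup₂ (f := fun σ (_ : σ ∈ Feas1 E μ ν t) ↦ σ univ) σ h

lemma map_fst_map_swap (σ : Measure (α × β)) :
    (σ.map Prod.swap).map Prod.fst = σ.map Prod.snd :=
  Measure.fst_map_swap

lemma map_snd_map_swap (σ : Measure (α × β)) :
    (σ.map Prod.swap).map Prod.snd = σ.map Prod.fst :=
  Measure.snd_map_swap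

variable {E : Set (α × β)} {μ : Measure α} {ν : Measure β}

lemma map_swap_mem_feas1 {t : ℝ} {σ : Measure (β × α)}
    (h : σ ∈ Feas0 (Prod.swap ⁻¹' E) ν μ t) : σ.map Prod.swap ∈ Feas1 E μ ν t := by
  obtain ⟨_, hE, hfst, hsnd⟩ := h
  refine ⟨inferInstance, ?_, ?_, ?_⟩
  · rwa [map_swap_apply]
  · exact (map_snd_map_swap σ).trans_le hfst
  · exact (map_fst_map_swap σ).trans_le hsnd

lemma map_swap_mem_feas0 {t : ℝ} {σ : Measure (β × α)}
    (h : σ ∈ Feas1 (Prod.swap ⁻¹' E) ν μ t) : σ.map Prod.swap ∈ Feas0 E μ ν t := by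
  obtain ⟨_, hE, hsnd, hfst⟩ := h
  refine ⟨inferInstance, ?_, ?_, ?_⟩
  · rwa [map_swap_apply]
  · exact (map_fst_map_swap σ).trans_le hsnd
  · exact (map_snd_map_swap σ).trans_le hfst

lemma fit0_preimage_swap (t : ℝ) : Fit0 (Prod.swap ⁻¹' E) ν μ t = Fit1 E μ ν t := by
  refine le_antisymm (iSup₂_le fun σ hσ ↦ ?_) (iSup₂_le fun σ hσ ↦ ?_)
  · simpa [map_swap_apply] using le_fit1 (map_swap_mem_feas1 hσ)
  · simpa [map_swap_apply] using le_fit0 (map_swap_mem_feas0 (E := Prod.swap ⁻¹' E) hσ)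

lemma fit1_preimage_swap (t : ℝ) : Fit1 (Prod.swap ⁻¹' E) ν μ t = Fit0 E μ ν t :=
  (fit0_preimage_swap (E := Prod.swap ⁻¹' E) t).symm

lemma levelOpt0_map_swap {π : Measure (α × β)} (h : LevelOpt1 E μ ν π) :
    LevelOpt0 (Prod.swap ⁻¹' E) ν μ (π.map Prod.swap) := fun t ht ↦ by
  rw [fit0_preimage_swap, map_snd_map_swap]
  exact h t ht

lemma levelOpt1_map_swap {π : Measure (α × β)} (h : LevelOpt0 E μ ν π) :
    LevelOpt1 (Prod.swap ⁻¹' E) ν μ (π.map Prod.swap) := fun t ht ↦ by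
  rw [fit1_preimage_swap, map_fst_map_swap]
  exact h t ht

lemma map_swap_mem_plans0 {π : Measure (α × β)} (h : π ∈ Plans1 E ν) :
    π.map Prod.swap ∈ Plans0 (Prod.swap ⁻¹' E) ν := by
  obtain ⟨_, hE, hsnd⟩ := h
  exact ⟨inferInstance, by rwa [map_swap_apply], (map_fst_map_swap π).trans hsnd⟩

lemma map_swap_mem_plans1 {π : Measure (α × β)} (h : π ∈ Plans0 E μ) :
    π.map Prod.swap ∈ Plans1 (Prod.swap ⁻¹' E) μ := by
  obtain ⟨_, hE, hfst⟩ := h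
  exact ⟨inferInstance, by rwa [map_swap_apply], (map_snd_map_swap π).trans hfst⟩

end Swap

section Thinning

variable {β : Type*} [MeasurableSpace β]

/-- Restricting to `nullSet` discards the singular part of `P` with respect to `ν`. -/
def capWeight (P ν : Measure β) (c : ℝ≥0∞) : β → ℝ≥0∞ :=
  (P.mutuallySingular_singularPart ν).nullSet.indicator
    fun y ↦ min (P.rnDeriv ν y) c / P.rnDeriv ν y

variable (P ν : Measure β) (c : ℝ≥0∞)

lemma measurable_capWeight : Measurable (capWeight P ν c) :=
  (((Measure.measurable_rnDeriv P ν).min measurable_const).div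
    (Measure.measurable_rnDeriv P ν)).indicator (Measure.MutuallySingular.measurableSet_nullSet _)

lemma capWeight_le_one (y : β) : capWeight P ν c y ≤ 1 := by
  unfold capWeight
  by_cases hy : y ∈ (P.mutuallySingular_singularPart ν).nullSet
  · rw [indicator_of_mem hy]
    exact (ENNReal.div_le_div_right (min_le_left _ _) _).trans ENNReal.div_self_le_one
  · rw [indicator_of_notMem hy]
    exact zero_le_one

lemma rnDeriv_le_of_capWeight_eq_one {c : ℝ≥0∞} {y : β}
    (hy : capWeight P ν c y = 1) : P.rnDeriv ν y ≤ c := by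
  unfold capWeight at hy
  by_cases hyS : y ∈ (P.mutuallySingular_singularPart ν).nullSet
  · rw [indicator_of_mem hyS] at hy
    by_contra! hlt
    rw [min_eq_right hlt.le] at hy
    exact (ENNReal.div_lt_of_lt_mul (by rwa [one_mul])).ne hy
  · rw [indicator_of_notMem hyS] at hy
    exact absurd hy zero_ne_one

lemma withDensity_capWeight [P.HaveLebesgueDecomposition ν] [SigmaFinite P] :
    P.withDensity (capWeight P ν c) = ν.withDensity fun y ↦ min (P.rnDeriv ν y) c := by
  set h := P.mutuallySingular_singularPart ν
  have hsing : (P.singularPart ν).withDensity (capWeight P ν c) = 0 := by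
    rw [capWeight, withDensity_indicator h.measurableSet_nullSet,
      Measure.restrict_eq_zero.2 h.measure_nullSet, withDensity_zero_left]
  conv_lhs => enter [1]; rw [P.haveLebesgueDecomposition_add ν]
  rw [withDensity_add_measure, hsing, zero_add,
    ← withDensity_mul _ (Measure.measurable_rnDeriv P ν) (measurable_capWeight P ν c)]
  refine withDensity_congr_ae ?_
  filter_upwards [measure_eq_zero_iff_ae_notMem.1 h.measure_compl_nullSet,
    Measure.rnDeriv_lt_top P ν] with y hyS hfin
  rw [notMem_compl_iff] at hyS
  simp only [Pi.mul_apply, capWeight, indicator_of_mem hyS]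
  rcases eq_or_ne (P.rnDeriv ν y) 0 with h0 | h0
  · simp [h0]
  · exact ENNReal.mul_div_cancel h0 hfin.ne

lemma restrict_capWeight_eq_one_le [P.HaveLebesgueDecomposition ν] [SigmaFinite P] :
    P.restrict {y | capWeight P ν c y = 1} ≤ c • ν.restrict {y | P.rnDeriv ν y ≤ c} := by
  set T := {y | capWeight P ν c y = 1}
  have hT : MeasurableSet T := measurableSet_eq_fun (measurable_capWeight P ν c) measurable_const
  calc P.restrict T = (P.withDensity (capWeight P ν c)).restrict T := by
        rw [restrict_withDensity hT]
        conv_lhs => rw [← withDensity_one (μ := P.restrict T)]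
        exact withDensity_congr_ae ((ae_restrict_mem hT).mono fun y hy ↦ hy.symm)
    _ = (ν.restrict T).withDensity fun y ↦ min (P.rnDeriv ν y) c := by
        rw [withDensity_capWeight, restrict_withDensity hT]
    _ ≤ (ν.restrict T).withDensity fun _ ↦ c :=
        withDensity_mono (Eventually.of_forall fun y ↦ min_le_right _ _)
    _ ≤ c • ν.restrict {y | P.rnDeriv ν y ≤ c} := by
        rw [withDensity_const]
        gcongr
        exact fun y hy ↦ rnDeriv_le_of_capWeight_eq_one P ν hy

end Thinning

section Saturation

variable {α β : Type} [MeasurableSpace α] [MeasurableSpace β]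
  {E : Set (α × β)} {μ : Measure α} {ν : Measure β}

def CapturesSubflows (E : Set (α × β)) (μ : Measure α) (ν : Measure β) (L : Set β)
    (G : Set α) : Prop :=
  ∀ ξ : Measure (α × β), IsFiniteMeasure ξ → ξ Eᶜ = 0 → ∀ a d : ℝ≥0∞, a ≠ ∞ → d ≠ ∞ →
    ξ.map Prod.fst ≤ a • μ → ξ.map Prod.snd ≤ d • ν.restrict L → ξ.map Prod.fst Gᶜ = 0

variable {s : ℝ} {κ : Measure (α × β)} [IsFiniteMeasure κ]
  {u : α → ℝ≥0∞} {w : β → ℝ≥0∞}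

lemma add_mem_feas0 (hκE : κ Eᶜ = 0) (hu : Measurable u)
    (hκu : κ.map Prod.fst = μ.withDensity u) (hu1 : ∀ᵐ x ∂μ, u x ≤ 1) (hw : Measurable w)
    (hκw : κ.map Prod.snd = ν.withDensity w) (hws : ∀ y, w y ≤ ENNReal.ofReal s)
    {ζ : Measure (α × β)} [IsFiniteMeasure ζ] (hζE : ζ Eᶜ = 0) {η : ℝ≥0∞}
    (hζfst : ζ.map Prod.fst ≤ η • μ.restrict {x | u x + η ≤ 1})
    (hζsnd : ζ.map Prod.snd ≤ η • ν.restrict {y | w y + η ≤ ENNReal.ofReal s}) :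
    κ + ζ ∈ Feas0 E μ ν s := by
  set W := {x | u x + η ≤ 1}
  set L := {y | w y + η ≤ ENNReal.ofReal s}
  have hW : MeasurableSet W := measurableSet_le (hu.add_const η) measurable_const
  have hL : MeasurableSet L := measurableSet_le (hw.add_const η) measurable_const
  refine ⟨inferInstance, by simp [hκE, hζE], ?_, ?_⟩
  · rw [Measure.map_add _ _ measurable_fst, hκu]
    calc μ.withDensity u + ζ.map Prod.fst ≤ μ.withDensity 1 := by
          grw [hζfst]
          refine withDensity_add_smul_restrict_le hu hW ?_
          filter_upwards [hu1] with x hx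
          by_cases hxW : x ∈ W <;> simp_all [W]
      _ = μ := withDensity_one
  · rw [Measure.map_add _ _ measurable_snd, hκw]
    calc ν.withDensity w + ζ.map Prod.snd ≤ ν.withDensity fun _ ↦ ENNReal.ofReal s := by
          grw [hζsnd]
          refine withDensity_add_smul_restrict_le hw hL (Eventually.of_forall fun y ↦ ?_)
          by_cases hyL : y ∈ L <;> simp_all [L]
      _ = ENNReal.ofReal s • ν := withDensity_const _

/-- Otherwise `κ` plus a small multiple of `ξ` restricted to the slack region would be a
feasible plan heavier than `Fit0`. -/
lemma measure_slack_eq_zero_of_fit0_le (hκE : κ Eᶜ = 0) (hmax : Fit0 E μ ν s ≤ κ univ)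
    (hu : Measurable u) (hκu : κ.map Prod.fst = μ.withDensity u) (hu1 : ∀ᵐ x ∂μ, u x ≤ 1)
    (hw : Measurable w) (hκw : κ.map Prod.snd = ν.withDensity w)
    (hws : ∀ y, w y ≤ ENNReal.ofReal s)
    {ξ : Measure (α × β)} [IsFiniteMeasure ξ] (hξE : ξ Eᶜ = 0) {a d : ℝ≥0∞}
    (ha : a ≠ ∞) (hd : d ≠ ∞) (hξfst : ξ.map Prod.fst ≤ a • μ) (hξsnd : ξ.map Prod.snd ≤ d • ν)
    {η : ℝ≥0∞} (hη0 : η ≠ 0) (hηtop : η ≠ ∞) :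
    ξ (Prod.fst ⁻¹' {x | u x + η ≤ 1} ∩ Prod.snd ⁻¹' {y | w y + η ≤ ENNReal.ofReal s}) = 0 := by
  set W := {x | u x + η ≤ 1}
  set L := {y | w y + η ≤ ENNReal.ofReal s}
  have hW : MeasurableSet W := measurableSet_le (hu.add_const η) measurable_const
  have hL : MeasurableSet L := measurableSet_le (hw.add_const η) measurable_const
  set ξ' := ξ.restrict (Prod.fst ⁻¹' W ∩ Prod.snd ⁻¹' L)
  set K := a + d + 1
  have hK0 : K ≠ 0 := by positivity
  have hKtop : K ≠ ∞ := by finiteness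
  set ε := η * K⁻¹
  have hεK : ε * K = η := by rw [mul_assoc, ENNReal.inv_mul_cancel hK0 hKtop, mul_one]
  have hεa : ε * a ≤ η := hεK ▸ by gcongr; simp [K, add_assoc]
  have hεd : ε * d ≤ η := hεK ▸ by gcongr; simp [K, add_assoc, add_comm a]
  have hε0 : ε ≠ 0 := mul_ne_zero hη0 (ENNReal.inv_ne_zero.2 hKtop)
  have hεtop : ε ≠ ∞ := ENNReal.mul_ne_top hηtop (ENNReal.inv_ne_top.2 hK0)
  have : IsFiniteMeasure ξ' := by unfold ξ'; infer_instance
  have : IsFiniteMeasure (ε • ξ') :=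
    ⟨by simpa using ENNReal.mul_lt_top hεtop.lt_top (measure_lt_top ξ' univ)⟩
  have hξ'E : ξ' Eᶜ = 0 := nonpos_iff_eq_zero.1 ((Measure.restrict_le_self Eᶜ).trans_eq hξE)
  have hfeas : κ + ε • ξ' ∈ Feas0 E μ ν s := by
    refine add_mem_feas0 (η := η) hκE hu hκu hu1 hw hκw hws (by simp [hξ'E]) ?_ ?_
    · rw [Measure.map_smul]
      grw [map_restrict_le_smul_restrict measurable_fst hξfst hW inter_subset_left, smul_smul,
        hεa]
    · rw [Measure.map_smul]
      grw [map_restrict_le_smul_restrict measurable_snd hξsnd hL inter_subset_right, smul_smul,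
        hεd]
  have hmass : κ univ + ε * ξ' univ ≤ κ univ + 0 := by
    simpa using (le_fit0 hfeas).trans hmax
  have := (ENNReal.add_le_add_iff_left (measure_ne_top κ univ)).1 hmass
  simpa [ξ', hε0] using this

lemma map_fst_setOf_lt_one_eq_zero_of_fit0_le (hκE : κ Eᶜ = 0) (hmax : Fit0 E μ ν s ≤ κ univ)
    (hu : Measurable u) (hκu : κ.map Prod.fst = μ.withDensity u) (hu1 : ∀ᵐ x ∂μ, u x ≤ 1)
    (hw : Measurable w) (hκw : κ.map Prod.snd = ν.withDensity w)
    (hws : ∀ y, w y ≤ ENNReal.ofReal s)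
    {ξ : Measure (α × β)} [IsFiniteMeasure ξ] (hξE : ξ Eᶜ = 0) {a d : ℝ≥0∞}
    (ha : a ≠ ∞) (hd : d ≠ ∞) (hξfst : ξ.map Prod.fst ≤ a • μ)
    (hξsnd : ξ.map Prod.snd ≤ d • ν.restrict {y | w y < ENNReal.ofReal s}) :
    ξ.map Prod.fst {x | u x < 1} = 0 := by
  set N := {y | w y < ENNReal.ofReal s}
  have hN : MeasurableSet N := measurableSet_lt hw measurable_const
  have hcover : Prod.fst ⁻¹' {x | u x < 1} ⊆ (⋃ n : {n : ℕ // n ≠ 0},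
      Prod.fst ⁻¹' {x | u x + (n : ℝ≥0∞)⁻¹ ≤ 1} ∩
        Prod.snd ⁻¹' {y | w y + (n : ℝ≥0∞)⁻¹ ≤ ENNReal.ofReal s}) ∪ Prod.snd ⁻¹' Nᶜ := by
    rintro ⟨x, y⟩ (hx : u x < 1)
    by_cases hy : w y < ENNReal.ofReal s
    · obtain ⟨n, hxn, hyn, hn⟩ := ((eventually_add_inv_nat_lt hx).and
        ((eventually_add_inv_nat_lt hy).and (eventually_ne_atTop 0))).exists
      exact Or.inl (mem_iUnion.2 ⟨⟨n, hn⟩, hxn.le, hyn.le⟩)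
    · exact Or.inr hy
  rw [Measure.map_apply measurable_fst (measurableSet_lt hu measurable_const)]
  refine measure_mono_null hcover (measure_union_null (measure_iUnion_null fun n ↦ ?_) ?_)
  · refine measure_slack_eq_zero_of_fit0_le hκE hmax hu hκu hu1 hw hκw hws hξE ha hd hξfst
      (hξsnd.trans ?_) (by simp) (by simpa using n.2)
    gcongr
    exact Measure.restrict_le_self
  · rw [← Measure.map_apply measurable_snd hN.compl]
    exact measure_compl_eq_zero_of_le_smul_restrict hN hξsnd

/-- `G` is where the thinning of `π` to capacity `s` on the second side still saturates `μ`. -/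
theorem exists_capturesSubflows_setOf_rnDeriv_lt {π : Measure (α × β)} (hπ : π ∈ Plans0 E μ)
    [SigmaFinite ν]
    (hopt : Fit0 E μ ν s ≤ ∫⁻ y, min ((π.map Prod.snd).rnDeriv ν y) (ENNReal.ofReal s) ∂ν) :
    ∃ G : Set α, MeasurableSet G ∧
      CapturesSubflows E μ ν {y | (π.map Prod.snd).rnDeriv ν y < ENNReal.ofReal s} G ∧
      (π.restrict (G ×ˢ univ)).map Prod.snd ≤
        ENNReal.ofReal s • ν.restrict {y | (π.map Prod.snd).rnDeriv ν y ≤ ENNReal.ofReal s} := by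
  obtain ⟨_, hπE, rfl⟩ := hπ
  set P := π.map Prod.snd
  set c := ENNReal.ofReal s
  set g := capWeight P ν c
  have hg := measurable_capWeight P ν c
  set κ := π.withDensity (g ∘ Prod.snd)
  have hκπ : κ ≤ π := withDensity_le_self fun p ↦ capWeight_le_one P ν c p.2
  have : IsFiniteMeasure κ := isFiniteMeasure_of_le π hκπ
  have hκE : κ Eᶜ = 0 := nonpos_iff_eq_zero.1 ((hκπ _).trans_eq hπE)
  have hκsnd : κ.map Prod.snd = ν.withDensity fun y ↦ min (P.rnDeriv ν y) c :=
    (map_withDensity_comp π measurable_snd hg).trans (withDensity_capWeight P ν c)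
  have hκfst : κ.map Prod.fst ≤ π.map Prod.fst := Measure.map_mono hκπ measurable_fst
  set u := (κ.map Prod.fst).rnDeriv (π.map Prod.fst)
  have hu : Measurable u := Measure.measurable_rnDeriv _ _
  have hκu : κ.map Prod.fst = (π.map Prod.fst).withDensity u :=
    (Measure.withDensity_rnDeriv_eq _ _ (Measure.absolutelyContinuous_of_le hκfst)).symm
  have hmax : Fit0 E (π.map Prod.fst) ν s ≤ κ univ := by
    refine hopt.trans_eq ?_
    rw [← setLIntegral_univ, ← withDensity_apply _ MeasurableSet.univ, ← hκsnd,
      Measure.map_apply measurable_snd MeasurableSet.univ, preimage_univ]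
  set G := {x | 1 ≤ u x}
  have hG : MeasurableSet G := measurableSet_le measurable_const hu
  refine ⟨G, hG, fun ξ _ hξE a d ha hd hξfst hξsnd ↦ ?_, ?_⟩
  · have hGc : Gᶜ = {x | u x < 1} := by ext; simp [G]
    have hN : {y | min (P.rnDeriv ν y) c < c} = {y | P.rnDeriv ν y < c} := by
      ext; simp
    rw [hGc]
    exact map_fst_setOf_lt_one_eq_zero_of_fit0_le hκE hmax hu hκu
      (Measure.rnDeriv_le_one_of_le hκfst) (by fun_prop) hκsnd (fun y ↦ min_le_right _ _)
      hξE ha hd hξfst (hN ▸ hξsnd)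
  · rw [prod_univ]
    refine (map_snd_restrict_le_of_le_withDensity hg (capWeight_le_one P ν c)
      (measurable_fst hG) ?_).trans (restrict_capWeight_eq_one_le P ν c)
    calc π (Prod.fst ⁻¹' G) = ∫⁻ _ in G, 1 ∂(π.map Prod.fst) := by
          rw [setLIntegral_one, Measure.map_apply measurable_fst hG]
      _ ≤ ∫⁻ x in G, u x ∂(π.map Prod.fst) := setLIntegral_mono hu fun x hx ↦ hx
      _ = κ (Prod.fst ⁻¹' G) := by
          rw [← withDensity_apply _ hG, ← hκu, Measure.map_apply measurable_fst hG]

end Saturation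

section Layers

variable {α β : Type} [MeasurableSpace α] [MeasurableSpace β]
  {E : Set (α × β)} {μ : Measure α} {ν : Measure β}

lemma measure_inter_le_mul_of_capturesSubflows {π : Measure (α × β)} [IsFiniteMeasure π]
    (hπE : π Eᶜ = 0) (hπ : π.map Prod.fst = μ) {G M : Set α} (hG : MeasurableSet G)
    (hM : MeasurableSet M) {H N : Set β} (hN : MeasurableSet N) {c : ℝ≥0∞} (hc : c ≠ ∞)
    (hπG : (π.restrict (G ×ˢ univ)).map Prod.snd ≤ c • ν.restrict N)
    (hH : CapturesSubflows (Prod.swap ⁻¹' E) ν μ M H) :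
    μ (G ∩ M) ≤ c * ν (H ∩ N) := by
  set ζ := π.restrict (Prod.fst ⁻¹' (G ∩ M))
  have hζsnd : ζ.map Prod.snd ≤ c • ν.restrict N :=
    (Measure.map_mono (Measure.restrict_mono (fun _ hp ↦ mk_mem_prod hp.1 (mem_univ _)) le_rfl)
      measurable_snd).trans hπG
  have hζfst : ζ.map Prod.fst = μ.restrict (G ∩ M) := by
    rw [← hπ, Measure.restrict_map measurable_fst (hG.inter hM)]
  have hHc : ζ.map Prod.snd Hᶜ = 0 := by
    rw [← map_fst_map_swap]
    refine hH _ inferInstance ?_ c 1 hc ENNReal.one_ne_top ?_ ?_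
    · rw [map_swap_apply]
      exact nonpos_iff_eq_zero.1 ((Measure.restrict_le_self _).trans_eq hπE)
    · rw [map_fst_map_swap]
      refine hζsnd.trans ?_
      gcongr
      exact Measure.restrict_le_self
    · rw [map_snd_map_swap, hζfst, one_smul]
      exact Measure.restrict_mono inter_subset_right le_rfl
  have hHN : ζ.map Prod.snd (H ∩ N)ᶜ = 0 := by
    rw [compl_inter]
    exact measure_union_null hHc (measure_compl_eq_zero_of_le_smul_restrict hN hζsnd)
  calc μ (G ∩ M) = ζ.map Prod.snd univ := by
        rw [Measure.map_apply measurable_snd .univ, preimage_univ, Measure.restrict_apply_univ,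
          ← hπ, Measure.map_apply measurable_fst (hG.inter hM)]
    _ = ζ.map Prod.snd (H ∩ N) := (measure_congr (ae_eq_univ.2 hHN)).symm
    _ ≤ c * ν.restrict N (H ∩ N) := hζsnd _
    _ ≤ c * ν (H ∩ N) := by
        gcongr
        exact Measure.restrict_le_self

/-- Going from `G ∩ M` to `H ∩ N` along `π` and back along `π'` multiplies mass by `c * d`. -/
lemma measure_inter_eq_zero_of_capturesSubflows [IsFiniteMeasure μ] {π π' : Measure (α × β)}
    (hπ : π ∈ Plans0 E μ) (hπ' : π' ∈ Plans1 E ν) {G M : Set α} (hG : MeasurableSet G)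
    (hM : MeasurableSet M) {H N : Set β} (hH : MeasurableSet H) (hN : MeasurableSet N)
    {c d : ℝ≥0∞} (hc : c ≠ ∞) (hd : d ≠ ∞) (hcd : c * d < 1)
    (hGcap : CapturesSubflows E μ ν N G)
    (hπG : (π.restrict (G ×ˢ univ)).map Prod.snd ≤ c • ν.restrict N)
    (hHcap : CapturesSubflows (Prod.swap ⁻¹' E) ν μ M H)
    (hπ'H : ((π'.map Prod.swap).restrict (H ×ˢ univ)).map Prod.snd ≤ d • μ.restrict M) :
    μ (G ∩ M) = 0 := by
  obtain ⟨_, hπE, hπfst⟩ := hπ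
  obtain ⟨_, hπ'E, hπ'snd⟩ := map_swap_mem_plans0 hπ'
  have h1 := measure_inter_le_mul_of_capturesSubflows hπE hπfst hG hM hN hc hπG hHcap
  have h2 := measure_inter_le_mul_of_capturesSubflows hπ'E hπ'snd hH hN hM hd hπ'H hGcap
  have hle : μ (G ∩ M) ≤ c * d * μ (G ∩ M) := h1.trans (by rw [mul_assoc]; gcongr)
  by_contra h0
  have := ENNReal.mul_lt_mul_right h0 (measure_ne_top _ _) hcd
  rw [mul_one, mul_comm] at this
  exact hle.not_gt this

lemma map_snd_eq_zero_of_capturesSubflows {G M : Set α} (hM : MeasurableSet M) {N : Set β}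
    (hN : MeasurableSet N) (hGcap : CapturesSubflows E μ ν N G) (hGM : μ (G ∩ M) = 0)
    {σ : Measure (α × β)} [IsFiniteMeasure σ] (hσE : σ Eᶜ = 0)
    (hσfst : σ.map Prod.fst ≤ μ.restrict M) (hσsnd : σ.map Prod.snd ≤ ν) :
    σ.map Prod.snd N = 0 := by
  set σ' := σ.restrict (Prod.snd ⁻¹' N)
  have hσ'fst : σ'.map Prod.fst ≤ (1 : ℝ≥0∞) • μ.restrict M := by
    rw [one_smul]
    exact (Measure.map_mono Measure.restrict_le_self measurable_fst).trans hσfst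
  have hGc : σ'.map Prod.fst Gᶜ = 0 := by
    refine hGcap σ' inferInstance ?_ 1 1 ENNReal.one_ne_top ENNReal.one_ne_top ?_ ?_
    · exact nonpos_iff_eq_zero.1 ((Measure.restrict_le_self _).trans_eq hσE)
    · exact hσ'fst.trans (by gcongr; exact Measure.restrict_le_self)
    · exact map_restrict_le_smul_restrict measurable_snd (by rwa [one_smul]) hN subset_rfl
  have hGMc : σ'.map Prod.fst (G ∩ M)ᶜ = 0 := by
    rw [compl_inter]
    exact measure_union_null hGc (measure_compl_eq_zero_of_le_smul_restrict hM hσ'fst)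
  refine nonpos_iff_eq_zero.1 ?_
  calc σ.map Prod.snd N = σ'.map Prod.fst univ := by
        rw [Measure.map_apply measurable_snd hN, Measure.map_apply measurable_fst .univ,
          preimage_univ, Measure.restrict_apply_univ]
    _ = σ'.map Prod.fst (G ∩ M) := (measure_congr (ae_eq_univ.2 hGMc)).symm
    _ ≤ μ.restrict M (G ∩ M) := by simpa using hσ'fst (G ∩ M)
    _ ≤ μ (G ∩ M) := Measure.restrict_apply_le _ _
    _ = 0 := hGM

lemma map_snd_setOf_rnDeriv_lt_eq_zero [IsFiniteMeasure μ] [IsFiniteMeasure ν]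
    {π π' : Measure (α × β)} (hπ : π ∈ Plans0 E μ) (hπ' : π' ∈ Plans1 E ν)
    (hopt : LevelOpt0 E μ ν π) (hopt' : LevelOpt1 E μ ν π') {s b t : ℝ} (hs : 0 < s)
    (hb : 0 < b) (htb : t < b) (hsb : s * b < 1)
    (hsν : ν {y | (π.map Prod.snd).rnDeriv ν y = ENNReal.ofReal s} = 0)
    (hbμ : μ {x | (π'.map Prod.fst).rnDeriv μ x = ENNReal.ofReal b} = 0)
    {σ : Measure (α × β)} [IsFiniteMeasure σ] (hσE : σ Eᶜ = 0)
    (hσfst : σ.map Prod.fst ≤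
      μ.restrict {x | (π'.map Prod.fst).rnDeriv μ x ≤ ENNReal.ofReal t})
    (hσsnd : σ.map Prod.snd ≤ ν) :
    σ.map Prod.snd {y | (π.map Prod.snd).rnDeriv ν y < ENNReal.ofReal s} = 0 := by
  set M := {x | (π'.map Prod.fst).rnDeriv μ x < ENNReal.ofReal b}
  set N := {y | (π.map Prod.snd).rnDeriv ν y < ENNReal.ofReal s}
  have hM : MeasurableSet M := measurableSet_lt (Measure.measurable_rnDeriv _ _) measurable_const
  have hN : MeasurableSet N := measurableSet_lt (Measure.measurable_rnDeriv _ _) measurable_const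
  obtain ⟨G, hG, hGcap, hπG⟩ := exists_capturesSubflows_setOf_rnDeriv_lt hπ (hopt s hs).ge
  obtain ⟨H, hH, hHcap, hπ'H⟩ := exists_capturesSubflows_setOf_rnDeriv_lt
    (map_swap_mem_plans0 hπ') (levelOpt0_map_swap hopt' b hb).ge
  rw [map_snd_map_swap] at hHcap hπ'H
  rw [restrict_setOf_le_eq_restrict_setOf_lt hsν] at hπG
  rw [restrict_setOf_le_eq_restrict_setOf_lt hbμ] at hπ'H
  have hGM : μ (G ∩ M) = 0 :=
    measure_inter_eq_zero_of_capturesSubflows hπ hπ' hG hM hH hN ENNReal.ofReal_ne_top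
      ENNReal.ofReal_ne_top (by rwa [← ENNReal.ofReal_mul hs.le, ENNReal.ofReal_lt_one])
      hGcap hπG hHcap hπ'H
  refine map_snd_eq_zero_of_capturesSubflows hM hN hGcap hGM hσE
    (hσfst.trans (Measure.restrict_mono (fun x hx ↦ ?_) le_rfl)) hσsnd
  exact hx.trans_lt ((ENNReal.ofReal_lt_ofReal_iff hb).2 htb)

theorem eq_zero_of_map_fst_le_of_map_snd_le [IsFiniteMeasure μ] [IsFiniteMeasure ν]
    {π π' : Measure (α × β)} (hπ : π ∈ Plans0 E μ) (hπ' : π' ∈ Plans1 E ν)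
    (hopt : LevelOpt0 E μ ν π) (hopt' : LevelOpt1 E μ ν π') {t : ℝ} (ht : 0 < t)
    {σ : Measure (α × β)} [IsFiniteMeasure σ] (hσE : σ Eᶜ = 0)
    (hσfst : σ.map Prod.fst ≤
      μ.restrict {x | (π'.map Prod.fst).rnDeriv μ x ≤ ENNReal.ofReal t})
    (hσsnd : σ.map Prod.snd ≤
      ν.restrict {y | ENNReal.ofReal (1 / t) ≤ (π.map Prod.snd).rnDeriv ν y}ᶜ) :
    σ = 0 := by
  set ρ := (π.map Prod.snd).rnDeriv ν
  set L := {y | ENNReal.ofReal (1 / t) ≤ ρ y}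
  have hL : MeasurableSet L := measurableSet_le measurable_const (Measure.measurable_rnDeriv _ _)
  have hlevel : ∀ q : ℝ, q < 1 / t → σ.map Prod.snd {y | ρ y < ENNReal.ofReal q} = 0 := by
    intro q hq
    obtain ⟨s, ⟨hqs, hst⟩, hsν⟩ := exists_mem_Ioo_measure_setOf_eq_ofReal_eq_zero (μ := ν)
      (Measure.measurable_rnDeriv _ _) (le_max_right q 0) (max_lt hq (by positivity))
    have hs : 0 < s := (le_max_right q 0).trans_lt hqs
    obtain ⟨b, ⟨htb, hbs⟩, hbμ⟩ := exists_mem_Ioo_measure_setOf_eq_ofReal_eq_zero (μ := μ)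
      (Measure.measurable_rnDeriv _ _) ht.le ((lt_one_div hs ht).1 hst)
    refine measure_mono_null (fun y (hy : ρ y < _) ↦ ?_)
      (map_snd_setOf_rnDeriv_lt_eq_zero hπ hπ' hopt hopt' hs (ht.trans htb) htb
        ((lt_div_iff₀' hs).1 hbs) hsν hbμ hσE hσfst
        (hσsnd.trans Measure.restrict_le_self))
    exact hy.trans_le (ENNReal.ofReal_le_ofReal ((le_max_left q 0).trans hqs.le))
  have hLc : σ.map Prod.snd Lᶜ = 0 := by
    refine measure_mono_null (fun y hy ↦ ?_)
      (measure_iUnion_null fun q : {q : ℚ // (q : ℝ) < 1 / t} ↦ hlevel q q.2)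
    obtain ⟨q, -, hyq, hqt⟩ := ENNReal.lt_iff_exists_rat_btwn.1 (not_le.1 hy)
    exact mem_iUnion.2 ⟨⟨q, ((ENNReal.ofReal_lt_ofReal_iff (by positivity)).1 hqt)⟩, hyq⟩
  have hL0 : σ.map Prod.snd L = 0 := by
    simpa using measure_compl_eq_zero_of_le_smul_restrict hL.compl (c := 1) (by rwa [one_smul])
  rw [← Measure.measure_univ_eq_zero, ← preimage_univ (f := Prod.snd),
    ← Measure.map_apply measurable_snd .univ, ← union_compl_self L]
  exact measure_union_null hL0 hLc

end Layers

theorem reciprocal_densities_layer_compatibility_general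
    (E : Set (Ω0 × Ω1))
    (ν0 : Measure Ω0) (ν1 : Measure Ω1) [IsFiniteMeasure ν0] [IsFiniteMeasure ν1]
    (π0 π1 : Measure (Ω0 × Ω1)) (hπ0 : π0 ∈ Plans0 E ν0) (hπ1 : π1 ∈ Plans1 E ν1)
    (hlom0 : LevelOpt0 E ν0 ν1 π0) (hlom1 : LevelOpt1 E ν0 ν1 π1)
    -- symmetric density decomposition data
    (P0 : Measure Ω0) (hP0 : P0 = π1.map Prod.fst)
    (P1 : Measure Ω1) (hP1 : P1 = π0.map Prod.snd)
    (ρ0 : Ω0 → ℝ≥0∞) (hρ0 : ρ0 = P0.rnDeriv ν0)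
    (ρ1 : Ω1 → ℝ≥0∞) (hρ1 : ρ1 = P1.rnDeriv ν1)
    (ν0ac : Measure Ω0)
    (hν0ac : ν0ac = (ν0.withDensity (P0.rnDeriv ν0)).withDensity
        (ν0.rnDeriv (ν0.withDensity (P0.rnDeriv ν0))))
    (ν1ac : Measure Ω1)
    (hν1ac : ν1ac = (ν1.withDensity (P1.rnDeriv ν1)).withDensity
        (ν1.rnDeriv (ν1.withDensity (P1.rnDeriv ν1))))
    (t : ℝ) (ht : 0 < t) :
    -- case ι = 0
    (∀ σ : Measure (Ω0 × Ω1), IsFiniteMeasure σ →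
      σ Eᶜ = 0 →
      σ.map Prod.fst ≤ ν0.restrict {x : Ω0 | ρ0 x ≤ ENNReal.ofReal t} →
      σ.map Prod.snd ≤ ν1ac.restrict {y : Ω1 | ENNReal.ofReal (1 / t) ≤ ρ1 y}ᶜ →
      σ = 0) ∧
    -- case ι = 1 (the subflow lives on Ω1 × Ω0)
    (∀ σ : Measure (Ω1 × Ω0), IsFiniteMeasure σ →
      σ {p : Ω1 × Ω0 | (p.2, p.1) ∈ E}ᶜ = 0 →
      σ.map Prod.fst ≤ ν1.restrict {y : Ω1 | ρ1 y ≤ ENNReal.ofReal t} →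
      σ.map Prod.snd ≤ ν0ac.restrict {x : Ω0 | ENNReal.ofReal (1 / t) ≤ ρ0 x}ᶜ →
      σ = 0) := by
  have hν0ac_le : ν0ac ≤ ν0 := hν0ac ▸ Measure.withDensity_rnDeriv_le _ _
  have hν1ac_le : ν1ac ≤ ν1 := hν1ac ▸ Measure.withDensity_rnDeriv_le _ _
  subst hρ0 hρ1 hP0 hP1
  refine ⟨fun σ _ hσE hσfst hσsnd ↦ ?_, fun σ _ hσE hσfst hσsnd ↦ ?_⟩
  · exact eq_zero_of_map_fst_le_of_map_snd_le hπ0 hπ1 hlom0 hlom1 ht hσE hσfst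
      (hσsnd.trans (Measure.restrict_mono subset_rfl hν1ac_le))
  · refine eq_zero_of_map_fst_le_of_map_snd_le (map_swap_mem_plans0 hπ1)
      (map_swap_mem_plans1 hπ0) (levelOpt0_map_swap hlom1) (levelOpt1_map_swap hlom0) ht hσE
      ?_ ?_
    · rwa [map_fst_map_swap]
    · rw [map_snd_map_swap]
      exact hσsnd.trans (Measure.restrict_mono subset_rfl hν0ac_le)

theorem reciprocal_densities_layer_compatibility
    [TopologicalSpace Ω0] [PolishSpace Ω0] [BorelSpace Ω0]
    [TopologicalSpace Ω1] [PolishSpace Ω1] [BorelSpace Ω1]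
    (E : Set (Ω0 × Ω1)) (hE : IsClosed E)
    (ν0 : Measure Ω0) (ν1 : Measure Ω1) [IsFiniteMeasure ν0] [IsFiniteMeasure ν1]
    (hν0 : 0 < ν0 Set.univ) (hν1 : 0 < ν1 Set.univ)
    (hNbhd0 : ∀ x : Ω0, ∃ y : Ω1, (x, y) ∈ E) (hNbhd1 : ∀ y : Ω1, ∃ x : Ω0, (x, y) ∈ E)
    (π0 π1 : Measure (Ω0 × Ω1)) (hπ0 : π0 ∈ Plans0 E ν0) (hπ1 : π1 ∈ Plans1 E ν1)
    (hlom0 : LevelOpt0 E ν0 ν1 π0) (hlom1 : LevelOpt1 E ν0 ν1 π1)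
    -- symmetric density decomposition data
    (P0 : Measure Ω0) (hP0 : P0 = π1.map Prod.fst)
    (P1 : Measure Ω1) (hP1 : P1 = π0.map Prod.snd)
    (ρ0 : Ω0 → ℝ≥0∞) (hρ0 : ρ0 = P0.rnDeriv ν0)
    (ρ1 : Ω1 → ℝ≥0∞) (hρ1 : ρ1 = P1.rnDeriv ν1)
    (ν0ac : Measure Ω0)
    (hν0ac : ν0ac = (ν0.withDensity (P0.rnDeriv ν0)).withDensity
        (ν0.rnDeriv (ν0.withDensity (P0.rnDeriv ν0))))
    (ν1ac : Measure Ω1)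
    (hν1ac : ν1ac = (ν1.withDensity (P1.rnDeriv ν1)).withDensity
        (ν1.rnDeriv (ν1.withDensity (P1.rnDeriv ν1))))
    (t : ℝ) (ht : 0 < t) :
    -- case ι = 0
    (∀ σ : Measure (Ω0 × Ω1), IsFiniteMeasure σ →
      σ Eᶜ = 0 →
      σ.map Prod.fst ≤ ν0.restrict {x : Ω0 | ρ0 x ≤ ENNReal.ofReal t} →
      σ.map Prod.snd ≤ ν1ac.restrict {y : Ω1 | ENNReal.ofReal (1 / t) ≤ ρ1 y}ᶜ →
      σ = 0) ∧
    -- case ι = 1 (the subflow lives on Ω1 × Ω0)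
    (∀ σ : Measure (Ω1 × Ω0), IsFiniteMeasure σ →
      σ {p : Ω1 × Ω0 | (p.2, p.1) ∈ E}ᶜ = 0 →
      σ.map Prod.fst ≤ ν1.restrict {y : Ω1 | ρ1 y ≤ ENNReal.ofReal t} →
      σ.map Prod.snd ≤ ν0ac.restrict {x : Ω0 | ENNReal.ofReal (1 / t) ≤ ρ0 x}ᶜ →
      σ = 0) :=
  reciprocal_densities_layer_compatibility_general E ν0 ν1 π0 π1 hπ0 hπ1 hlom0 hlom1 P0 hP0 P1 hP1
    ρ0 hρ0 ρ1 hρ1 ν0ac hν0ac ν1ac hν1ac t ht
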